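/- Let T1 and T2 be two rooted phylogenetic trees chosen independently and uniformly at random (with replacement) from RP(n), the set of all rooted phylogenies over the taxon set [n]. Then for every p ∈ [0,1], the expected parametric triplet distance satisfies E(d^(p)(T1,T2)) = C(n,3) · ( (2/3)·r(n+1)^2 + 2·p·r(n+1)·u(n+1) ), where r(n+1) and u(n+1) are the quartet resolution probabilities for uniformly random unrooted phylogenies over [n+1], and C(n,3) is 'n choose 3'. -/

import Mathlib

open Finset

attribute [local instance] Classical.propDecidable

/-- A rooted phylogenetic tree over the taxon set `Fin n`, encoded by its hierarchy of
clusters: for each node of the tree, the set of leaves descending from that node.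
The conditions say that the whole leaf set and all singletons are clusters, the empty
set is not a cluster, and that the family is laminar.  Such families correspond exactly
to rooted phylogenies in which every internal node has at least two children. -/
structure RTree (n : ℕ) where
  clusters : Finset (Finset (Fin n))
  univ_mem : Finset.univ ∈ clusters
  singleton_mem : ∀ x : Fin n, {x} ∈ clusters
  empty_not_mem : ∅ ∉ clusters
  laminar : ∀ C ∈ clusters, ∀ D ∈ clusters, C ⊆ D ∨ D ⊆ C ∨ C ∩ D = ∅

/-- All triplets (3-element subsets) of `Fin n`. -/
def triplets (n : ℕ) : Finset (Finset (Fin n)) :=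
  Finset.powersetCard 3 Finset.univ

/-- The cluster family of the restriction `T|X`, for a rooted tree with cluster
family `F`: the nonempty intersections of clusters with `X`. -/
noncomputable def famRestrict {n : ℕ} (F : Finset (Finset (Fin n))) (X : Finset (Fin n)) :
    Finset (Finset (Fin n)) :=
  (F.image (· ∩ X)).filter (· ≠ ∅)

/-- A triplet `X` is resolved in a rooted tree with cluster family `F` iff the
restriction `T|X` is fully resolved, equivalently iff some cluster contains exactly
two of the three elements of `X`. -/
def famResolved {n : ℕ} (F : Finset (Finset (Fin n))) (X : Finset (Fin n)) : Prop :=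
  ∃ C ∈ F, (C ∩ X).card = 2

/-- Triplets resolved, identically, in both trees. -/
noncomputable def famSetS {n : ℕ} (F G : Finset (Finset (Fin n))) :
    Finset (Finset (Fin n)) :=
  (triplets n).filter fun X =>
    famResolved F X ∧ famResolved G X ∧ famRestrict F X = famRestrict G X

/-- Triplets resolved, differently, in both trees. -/
noncomputable def famSetD {n : ℕ} (F G : Finset (Finset (Fin n))) :
    Finset (Finset (Fin n)) :=
  (triplets n).filter fun X =>
    famResolved F X ∧ famResolved G X ∧ famRestrict F X ≠ famRestrict G X

/-- Triplets resolved in the first tree but not in the second. -/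
noncomputable def famSetR1 {n : ℕ} (F G : Finset (Finset (Fin n))) :
    Finset (Finset (Fin n)) :=
  (triplets n).filter fun X => famResolved F X ∧ ¬ famResolved G X

/-- Triplets resolved in the second tree but not in the first. -/
noncomputable def famSetR2 {n : ℕ} (F G : Finset (Finset (Fin n))) :
    Finset (Finset (Fin n)) :=
  (triplets n).filter fun X => famResolved G X ∧ ¬ famResolved F X

/-- Triplets unresolved in both trees. -/
noncomputable def famSetU {n : ℕ} (F G : Finset (Finset (Fin n))) :
    Finset (Finset (Fin n)) :=
  (triplets n).filter fun X => ¬ famResolved F X ∧ ¬ famResolved G X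

/-- The parametric triplet distance, at the level of cluster families. -/
noncomputable def famPdist {n : ℕ} (p : ℝ) (F G : Finset (Finset (Fin n))) : ℝ :=
  ((famSetD F G).card : ℝ) +
    p * (((famSetR1 F G).card : ℝ) + ((famSetR2 F G).card : ℝ))

namespace RTree

variable {n : ℕ}

/-- The cluster family of the restriction `T|X`. -/
noncomputable def restrict (T : RTree n) (X : Finset (Fin n)) : Finset (Finset (Fin n)) :=
  famRestrict T.clusters X

/-- The triplet `X` is resolved in `T`, i.e. `T|X` is fully resolved. -/
def Resolved (T : RTree n) (X : Finset (Fin n)) : Prop :=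
  famResolved T.clusters X

/-- A rooted phylogeny is fully resolved (all internal nodes have exactly two
children) iff every triplet is resolved in it. -/
def FullyResolved (T : RTree n) : Prop :=
  ∀ X ∈ triplets n, T.Resolved X

noncomputable def setS (T₁ T₂ : RTree n) : Finset (Finset (Fin n)) :=
  famSetS T₁.clusters T₂.clusters

noncomputable def setD (T₁ T₂ : RTree n) : Finset (Finset (Fin n)) :=
  famSetD T₁.clusters T₂.clusters

noncomputable def setR1 (T₁ T₂ : RTree n) : Finset (Finset (Fin n)) :=
  famSetR1 T₁.clusters T₂.clusters

noncomputable def setR2 (T₁ T₂ : RTree n) : Finset (Finset (Fin n)) :=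
  famSetR2 T₁.clusters T₂.clusters

noncomputable def setU (T₁ T₂ : RTree n) : Finset (Finset (Fin n)) :=
  famSetU T₁.clusters T₂.clusters

/-- The parametric triplet distance `d⁽ᵖ⁾(T₁,T₂)`. -/
noncomputable def pdist (p : ℝ) (T₁ T₂ : RTree n) : ℝ :=
  famPdist p T₁.clusters T₂.clusters

theorem clusters_injective : Function.Injective (clusters (n := n)) := by
  rintro ⟨s₁, _, _, _, _⟩ ⟨s₂, _, _, _, _⟩ h
  simp only [mk.injEq] at h ⊢
  exact h

noncomputable instance : Fintype (RTree n) :=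
  Fintype.ofInjective clusters clusters_injective

end RTree

/-- An unrooted phylogenetic tree over the taxon set `Fin n`, encoded by its split
system: the collection of all sets of leaves lying on one side of some edge of the
tree.  By the splits-equivalence (Buneman) theorem, the families satisfying these
conditions (all trivial splits present, closure under complementation, pairwise
compatibility) correspond exactly to unrooted phylogenies in which every internal
node has degree at least three. -/
structure UTree (n : ℕ) where
  splits : Finset (Finset (Fin n))
  empty_not_mem : ∅ ∉ splits
  trivial_mem : ∀ x : Fin n, ({x} : Finset (Fin n)) = Finset.univ ∨ {x} ∈ splits
  compl_mem : ∀ A ∈ splits, Finset.univ \ A ∈ splits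
  compat : ∀ A ∈ splits, ∀ B ∈ splits, A ⊆ B ∨ B ⊆ A ∨ A ∩ B = ∅ ∨ A ∪ B = Finset.univ

/-- All quartets (4-element subsets) of `Fin n`. -/
def quartets (n : ℕ) : Finset (Finset (Fin n)) :=
  Finset.powersetCard 4 Finset.univ

/-- The split system of the restriction `T|X`, for an unrooted tree with split
system `F`: the proper nonempty intersections of split sides with `X`. -/
noncomputable def famRestrictU {n : ℕ} (F : Finset (Finset (Fin n))) (X : Finset (Fin n)) :
    Finset (Finset (Fin n)) :=
  (F.image (· ∩ X)).filter fun A => A ≠ ∅ ∧ A ≠ X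

/-- A quartet `X` is resolved in an unrooted tree with split system `F` iff the
restriction `T|X` is fully resolved, equivalently iff some split side contains
exactly two of the four elements of `X`. -/
def famResolvedU {n : ℕ} (F : Finset (Finset (Fin n))) (X : Finset (Fin n)) : Prop :=
  ∃ A ∈ F, (A ∩ X).card = 2

/-- Quartets resolved, identically, in both trees. -/
noncomputable def famSetSU {n : ℕ} (F G : Finset (Finset (Fin n))) :
    Finset (Finset (Fin n)) :=
  (quartets n).filter fun X =>
    famResolvedU F X ∧ famResolvedU G X ∧ famRestrictU F X = famRestrictU G X

/-- Quartets resolved, differently, in both trees. -/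
noncomputable def famSetDU {n : ℕ} (F G : Finset (Finset (Fin n))) :
    Finset (Finset (Fin n)) :=
  (quartets n).filter fun X =>
    famResolvedU F X ∧ famResolvedU G X ∧ famRestrictU F X ≠ famRestrictU G X

/-- Quartets resolved in the first tree but not in the second. -/
noncomputable def famSetR1U {n : ℕ} (F G : Finset (Finset (Fin n))) :
    Finset (Finset (Fin n)) :=
  (quartets n).filter fun X => famResolvedU F X ∧ ¬ famResolvedU G X

/-- Quartets resolved in the second tree but not in the first. -/
noncomputable def famSetR2U {n : ℕ} (F G : Finset (Finset (Fin n))) :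
    Finset (Finset (Fin n)) :=
  (quartets n).filter fun X => famResolvedU G X ∧ ¬ famResolvedU F X

/-- Quartets unresolved in both trees. -/
noncomputable def famSetUU {n : ℕ} (F G : Finset (Finset (Fin n))) :
    Finset (Finset (Fin n)) :=
  (quartets n).filter fun X => ¬ famResolvedU F X ∧ ¬ famResolvedU G X

/-- The parametric quartet distance, at the level of split systems. -/
noncomputable def famPdistU {n : ℕ} (p : ℝ) (F G : Finset (Finset (Fin n))) : ℝ :=
  ((famSetDU F G).card : ℝ) +
    p * (((famSetR1U F G).card : ℝ) + ((famSetR2U F G).card : ℝ))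

namespace UTree

variable {n : ℕ}

/-- The split system of the restriction `T|X`. -/
noncomputable def restrict (T : UTree n) (X : Finset (Fin n)) : Finset (Finset (Fin n)) :=
  famRestrictU T.splits X

/-- The quartet `X` is resolved in `T`, i.e. `T|X` is fully resolved. -/
def Resolved (T : UTree n) (X : Finset (Fin n)) : Prop :=
  famResolvedU T.splits X

/-- An unrooted phylogeny is fully resolved (all internal nodes have degree exactly
three) iff every quartet is resolved in it. -/
def FullyResolved (T : UTree n) : Prop :=
  ∀ X ∈ quartets n, T.Resolved X

noncomputable def setS (T₁ T₂ : UTree n) : Finset (Finset (Fin n)) :=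
  famSetSU T₁.splits T₂.splits

noncomputable def setD (T₁ T₂ : UTree n) : Finset (Finset (Fin n)) :=
  famSetDU T₁.splits T₂.splits

noncomputable def setR1 (T₁ T₂ : UTree n) : Finset (Finset (Fin n)) :=
  famSetR1U T₁.splits T₂.splits

noncomputable def setR2 (T₁ T₂ : UTree n) : Finset (Finset (Fin n)) :=
  famSetR2U T₁.splits T₂.splits

noncomputable def setU (T₁ T₂ : UTree n) : Finset (Finset (Fin n)) :=
  famSetUU T₁.splits T₂.splits

/-- The parametric quartet distance `d⁽ᵖ⁾(T₁,T₂)`. -/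
noncomputable def pdist (p : ℝ) (T₁ T₂ : UTree n) : ℝ :=
  famPdistU p T₁.splits T₂.splits

theorem splits_injective : Function.Injective (splits (n := n)) := by
  rintro ⟨s₁, _, _, _, _⟩ ⟨s₂, _, _, _, _⟩ h
  simp only [mk.injEq] at h ⊢
  exact h

noncomputable instance : Fintype (UTree n) :=
  Fintype.ofInjective splits splits_injective

end UTree

/-- `r(n)` : the probability that the fixed quartet `X` is resolved in an unrooted
phylogeny chosen uniformly at random from `P(n)`.  (By symmetry this does not depend
on the choice of the quartet `X`.) -/
noncomputable def uResProb (n : ℕ) (X : Finset (Fin n)) : ℝ :=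
  ((Finset.univ.filter fun T : UTree n => T.Resolved X).card : ℝ) /
    (Fintype.card (UTree n) : ℝ)

/-!
Attaching a new taxon `n + 1` above the root is a bijection between rooted phylogenies on `[n]`
and unrooted phylogenies on `[n + 1]`, under which a triplet `t` is resolved exactly when the
quartet `t ∪ {n + 1}` is. Together with the relabelling symmetry, this makes `r(n + 1)` the
probability that a fixed triplet is resolved in a uniformly random rooted phylogeny on `[n]`.

By linearity of expectation it is enough to consider a single triplet `t`. If `t` is resolved
in `T`, exactly one of its three 2-subsets `t.erase c` is the trace of a cluster of `T` (the
cherry of `T|t`), and that cherry determines `T|t`. By symmetry each of the three cherries occurs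
with probability `r / 3`. So two independent trees resolve `t` differently with probability
`r² - 3 (r / 3)² = (2/3) r²`, and exactly one of them resolves `t` with probability
`2 r (1 - r)`.
-/

theorem Finset.exists_eq_erase_of_subset {α : Type*} [DecidableEq α] {s t : Finset α}
    (h : s ⊆ t) (hcard : s.card + 1 = t.card) : ∃ a ∈ t, s = t.erase a := by
  have := mem_shadow_iff_exists_mem_card_add_one.mpr ⟨t, mem_singleton_self t, h, hcard.symm⟩
  simpa [mem_shadow_iff, eq_comm] using this

theorem Finset.exists_perm_image_eq {α : Type*} [Fintype α] [DecidableEq α] {s t : Finset α}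
    (h : s.card = t.card) : ∃ σ : Equiv.Perm α, s.image σ = t := by
  let e : {x // x ∈ s} ≃ {x // x ∈ t} := Fintype.equivOfCardEq (by simpa using h)
  refine ⟨e.extendSubtype, eq_of_subset_of_card_le ?_ ?_⟩
  · intro y hy
    obtain ⟨x, hx, rfl⟩ := mem_image.mp hy
    exact e.extendSubtype_mem x hx
  · rw [card_image_of_injective _ (Equiv.injective _), h]

theorem Finset.card_filter_univ_prod {α β : Type*} [Fintype α] [Fintype β] (p : α → Prop)
    (q : β → Prop) [DecidablePred p] [DecidablePred q] :
    #{x : α × β | p x.1 ∧ q x.2} = #{a | p a} * #{b | q b} := by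
  rw [← card_product, ← filter_product, univ_product_univ]

theorem mem_triplets {n : ℕ} {t : Finset (Fin n)} : t ∈ triplets n ↔ t.card = 3 := by
  simp [triplets]

theorem card_triplets (n : ℕ) : (triplets n).card = n.choose 3 := by
  simp [triplets]

section Relabel

variable {n m : ℕ}

theorem famResolved_image (e : Fin n ≃ Fin m) (F : Finset (Finset (Fin n))) (X : Finset (Fin n)) :
    famResolved (F.image (·.image e)) (X.image e) ↔ famResolved F X := by
  simp [famResolved, ← image_inter _ _ e.injective, card_image_of_injective _ e.injective]

theorem famRestrict_image (e : Fin n ≃ Fin m) (F : Finset (Finset (Fin n))) (X : Finset (Fin n)) :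
    famRestrict (F.image (·.image e)) (X.image e) = (famRestrict F X).image (·.image e) := by
  simp [famRestrict, ← image_inter _ _ e.injective, image_image, filter_image, Function.comp_def]

theorem image_image_equiv_symm (e : Fin n ≃ Fin m) (F : Finset (Finset (Fin n))) :
    (F.image (·.image e)).image (·.image e.symm) = F := by
  simp [image_image, Function.comp_def]

namespace RTree

def map (e : Fin n ≃ Fin m) (T : RTree n) : RTree m where
  clusters := T.clusters.image (·.image e)
  univ_mem := mem_image.mpr ⟨univ, T.univ_mem, image_univ_equiv e⟩
  singleton_mem x := mem_image.mpr ⟨{e.symm x}, T.singleton_mem _, by simp⟩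
  empty_not_mem := by simpa using T.empty_not_mem
  laminar := by
    simp only [mem_image, forall_exists_index, and_imp, forall_apply_eq_imp_iff₂]
    intro C hC D hD
    simp only [image_subset_image_iff e.injective, ← image_inter _ _ e.injective, image_eq_empty]
    exact T.laminar C hC D hD

theorem restrict_map (e : Fin n ≃ Fin m) (T : RTree n) (X : Finset (Fin n)) :
    (T.map e).restrict (X.image e) = (T.restrict X).image (·.image e) :=
  famRestrict_image e T.clusters X

@[simps]
def mapEquiv (e : Fin n ≃ Fin m) : RTree n ≃ RTree m where
  toFun := map e
  invFun := map e.symm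
  left_inv T := clusters_injective (image_image_equiv_symm e T.clusters)
  right_inv T := clusters_injective (by simpa [map] using image_image_equiv_symm e.symm T.clusters)

end RTree

namespace UTree

def map (e : Fin n ≃ Fin m) (T : UTree n) : UTree m where
  splits := T.splits.image (·.image e)
  empty_not_mem := by simpa using T.empty_not_mem
  trivial_mem x := by
    rcases T.trivial_mem (e.symm x) with h | h
    · left
      simpa [image_univ_equiv] using congrArg (·.image e) h
    · exact Or.inr (mem_image.mpr ⟨_, h, by simp⟩)
  compl_mem := by
    simp only [mem_image, forall_exists_index, and_imp, forall_apply_eq_imp_iff₂]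
    intro A hA
    exact ⟨univ \ A, T.compl_mem A hA, by rw [image_sdiff _ _ e.injective, image_univ_equiv]⟩
  compat := by
    simp only [mem_image, forall_exists_index, and_imp, forall_apply_eq_imp_iff₂]
    intro A hA B hB
    simp only [image_subset_image_iff e.injective, ← image_inter _ _ e.injective, image_eq_empty,
      ← image_union, ← image_univ_equiv e, image_injective e.injective |>.eq_iff]
    exact T.compat A hA B hB

theorem resolved_map (e : Fin n ≃ Fin m) (T : UTree n) (X : Finset (Fin n)) :
    (T.map e).Resolved (X.image e) ↔ T.Resolved X :=
  famResolved_image e T.splits X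

@[simps]
def mapEquiv (e : Fin n ≃ Fin m) : UTree n ≃ UTree m where
  toFun := map e
  invFun := map e.symm
  left_inv T := splits_injective (image_image_equiv_symm e T.splits)
  right_inv T := splits_injective (by simpa [map] using image_image_equiv_symm e.symm T.splits)

end UTree

end Relabel

namespace RTree

variable {n : ℕ} {t A P Q : Finset (Fin n)}

theorem mem_restrict_iff (T : RTree n) :
    A ∈ T.restrict t ↔ A ≠ ∅ ∧ ∃ C ∈ T.clusters, C ∩ t = A := by
  simp [restrict, famRestrict, and_comm]

theorem subset_of_mem_restrict (T : RTree n) (hA : A ∈ T.restrict t) : A ⊆ t := by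
  obtain ⟨-, C, -, rfl⟩ := T.mem_restrict_iff.mp hA
  exact inter_subset_right

theorem eq_of_mem_restrict (T : RTree n) (ht : t.card = 3) (hP : P ∈ T.restrict t)
    (hQ : Q ∈ T.restrict t) (hP2 : P.card = 2) (hQ2 : Q.card = 2) : P = Q := by
  obtain ⟨-, C, hC, rfl⟩ := T.mem_restrict_iff.mp hP
  obtain ⟨-, D, hD, rfl⟩ := T.mem_restrict_iff.mp hQ
  rcases T.laminar C hC D hD with h | h | h
  · exact eq_of_subset_of_card_le (inter_subset_inter_right h) (by omega)
  · exact (eq_of_subset_of_card_le (inter_subset_inter_right h) (by omega)).symm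
  · have hdisj : Disjoint (C ∩ t) (D ∩ t) :=
      disjoint_iff_inter_eq_empty.mpr (by rw [inter_inter_inter_comm, h, empty_inter])
    have := card_le_card (union_subset (inter_subset_right (s₁ := C) (s₂ := t))
      (inter_subset_right (s₁ := D) (s₂ := t)))
    rw [card_union_of_disjoint hdisj] at this
    omega

theorem resolved_iff_exists_erase_mem_restrict (T : RTree n) (ht : t.card = 3) :
    T.Resolved t ↔ ∃ c ∈ t, t.erase c ∈ T.restrict t := by
  constructor
  · rintro ⟨C, hC, h2⟩
    obtain ⟨c, hc, he⟩ :=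
      exists_eq_erase_of_subset (inter_subset_right (s₁ := C) (s₂ := t)) (by omega)
    refine ⟨c, hc, he ▸ T.mem_restrict_iff.mpr ⟨?_, C, hC, rfl⟩⟩
    exact nonempty_iff_ne_empty.mp (card_pos.mp (by omega))
  · rintro ⟨c, hc, h⟩
    obtain ⟨-, C, hC, hCt⟩ := T.mem_restrict_iff.mp h
    exact ⟨C, hC, by rw [hCt, card_erase_of_mem hc, ht]⟩

theorem mem_restrict_iff_of_erase_mem (T : RTree n) (ht : t.card = 3) {c : Fin n} (hc : c ∈ t)
    (hcT : t.erase c ∈ T.restrict t) :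
    A ∈ T.restrict t ↔ A = t ∨ A = t.erase c ∨ ∃ x ∈ t, A = {x} := by
  constructor
  · intro hA
    have hAt := T.subset_of_mem_restrict hA
    have hpos : 0 < A.card :=
      card_pos.mpr (nonempty_iff_ne_empty.mpr (T.mem_restrict_iff.mp hA).1)
    have hle : A.card ≤ 3 := ht ▸ card_le_card hAt
    obtain h1 | h2 | h3 : A.card = 1 ∨ A.card = 2 ∨ A.card = 3 := by omega
    · obtain ⟨x, rfl⟩ := card_eq_one.mp h1
      exact Or.inr (Or.inr ⟨x, singleton_subset_iff.mp hAt, rfl⟩)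
    · exact Or.inr (Or.inl (T.eq_of_mem_restrict ht hA hcT h2 (by rw [card_erase_of_mem hc, ht])))
    · exact Or.inl (eq_of_subset_of_card_le hAt (by omega))
  · rintro (rfl | rfl | ⟨x, hx, rfl⟩)
    · exact T.mem_restrict_iff.mpr
        ⟨nonempty_iff_ne_empty.mp (card_pos.mp (by omega)), univ, T.univ_mem, univ_inter A⟩
    · exact hcT
    · exact T.mem_restrict_iff.mpr ⟨singleton_ne_empty x, {x}, T.singleton_mem x,
        singleton_inter_of_mem hx⟩

theorem restrict_eq_restrict_iff (T₁ T₂ : RTree n) (ht : t.card = 3) {c : Fin n} (hc : c ∈ t)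
    (h₁ : t.erase c ∈ T₁.restrict t) :
    T₁.restrict t = T₂.restrict t ↔ t.erase c ∈ T₂.restrict t := by
  refine ⟨fun h => h ▸ h₁, fun h₂ => ?_⟩
  ext A
  rw [T₁.mem_restrict_iff_of_erase_mem ht hc h₁, T₂.mem_restrict_iff_of_erase_mem ht hc h₂]

theorem card_erase_mem_restrict_eq {c d : Fin n} (hc : c ∈ t) (hd : d ∈ t) :
    #{T : RTree n | t.erase c ∈ T.restrict t} = #{T : RTree n | t.erase d ∈ T.restrict t} := by
  set σ := Equiv.swap c d
  have hσt : t.image σ = t := by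
    refine eq_of_subset_of_card_le ?_ (card_image_of_injective _ σ.injective).ge
    rintro _ hy
    obtain ⟨x, hx, rfl⟩ := mem_image.mp hy
    rw [Equiv.swap_apply_def]
    split_ifs <;> assumption
  have hσc : (t.erase c).image σ = t.erase d := by
    rw [image_erase σ.injective, hσt, Equiv.swap_apply_left]
  refine card_equiv (mapEquiv σ) fun T => ?_
  have hres := restrict_map σ T t
  rw [hσt] at hres
  simp only [mem_filter, mem_univ, true_and]
  rw [mapEquiv_apply, hres, ← hσc, (image_injective σ.injective).mem_finset_image]

theorem three_mul_card_erase_mem_restrict (ht : t.card = 3) {c : Fin n} (hc : c ∈ t) :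
    3 * #{T : RTree n | t.erase c ∈ T.restrict t} = #{T : RTree n | T.Resolved t} := by
  have hunion : univ.filter (·.Resolved t) =
      t.biUnion fun d => univ.filter (fun T : RTree n => t.erase d ∈ T.restrict t) := by
    ext T
    simp [T.resolved_iff_exists_erase_mem_restrict ht]
  rw [hunion, card_biUnion, sum_congr rfl fun d hd => card_erase_mem_restrict_eq hd hc,
    sum_const, ht, smul_eq_mul]
  intro d hd d' hd' hne
  refine disjoint_left.mpr fun T h h' => hne ?_
  simp only [mem_filter, mem_univ, true_and] at h h'
  refine t.erase_injOn hd hd' (T.eq_of_mem_restrict ht h h' ?_ ?_) <;>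
    rw [card_erase_of_mem ‹_›, ht]

theorem three_mul_card_resolved_restrict_ne (ht : t.card = 3) {T₁ : RTree n}
    (h₁ : T₁.Resolved t) :
    3 * #{T₂ : RTree n | T₂.Resolved t ∧ T₁.restrict t ≠ T₂.restrict t} =
      2 * #{T : RTree n | T.Resolved t} := by
  obtain ⟨c, hc, hcT⟩ := (T₁.resolved_iff_exists_erase_mem_restrict ht).mp h₁
  have hsub : univ.filter (fun T : RTree n => t.erase c ∈ T.restrict t) ⊆
      univ.filter (·.Resolved t) :=
    monotone_filter_right _ fun T _ h =>
      (resolved_iff_exists_erase_mem_restrict T ht).mpr ⟨c, hc, h⟩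
  have hdiff :
      univ.filter (fun T₂ : RTree n => T₂.Resolved t ∧ T₁.restrict t ≠ T₂.restrict t) =
        univ.filter (·.Resolved t) \
          univ.filter (fun T : RTree n => t.erase c ∈ T.restrict t) := by
    ext T₂
    simp [restrict_eq_restrict_iff T₁ T₂ ht hc hcT]
  rw [hdiff, card_sdiff_of_subset hsub, ← three_mul_card_erase_mem_restrict ht hc]
  omega

theorem three_mul_card_resolved_differently (ht : t.card = 3) :
    3 * #{x : RTree n × RTree n |
        x.1.Resolved t ∧ x.2.Resolved t ∧ x.1.restrict t ≠ x.2.restrict t} =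
      2 * #{T : RTree n | T.Resolved t} ^ 2 := by
  have (T₁ : RTree n) :
      3 * #{T₂ : RTree n |
          T₁.Resolved t ∧ T₂.Resolved t ∧ T₁.restrict t ≠ T₂.restrict t} =
        if T₁.Resolved t then 2 * #{T : RTree n | T.Resolved t} else 0 := by
    split_ifs with h₁
    · simpa [h₁] using three_mul_card_resolved_restrict_ne ht h₁
    · simp [h₁]
  rw [card_filter, Fintype.sum_prod_type, mul_sum]
  simp_rw [← card_filter, this, sum_ite, sum_const_zero, sum_const, smul_eq_mul]
  ring

end RTree

section RootedToUnrooted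

def SplitCompatible {α : Type*} [Fintype α] [DecidableEq α] (A B : Finset α) : Prop :=
  A ⊆ B ∨ B ⊆ A ∨ A ∩ B = ∅ ∨ A ∪ B = univ

variable {α : Type*} [Fintype α] [DecidableEq α] {A B : Finset α}

theorem splitCompatible_comm : SplitCompatible A B ↔ SplitCompatible B A := by
  unfold SplitCompatible
  rw [inter_comm, union_comm]
  tauto

theorem splitCompatible_sdiff_left : SplitCompatible (univ \ A) B ↔ SplitCompatible A B := by
  have h₁ : univ \ A ⊆ B ↔ A ∪ B = univ := by
    simp only [subset_iff, eq_univ_iff_forall, mem_sdiff, mem_union, mem_univ, true_and]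
    grind
  have h₂ : B ⊆ univ \ A ↔ A ∩ B = ∅ := by
    simp only [subset_iff, eq_empty_iff_forall_notMem, mem_sdiff, mem_inter, mem_univ, true_and]
    grind
  have h₃ : (univ \ A) ∩ B = ∅ ↔ B ⊆ A := by
    simp only [subset_iff, eq_empty_iff_forall_notMem, mem_sdiff, mem_inter, mem_univ, true_and]
    grind
  have h₄ : (univ \ A) ∪ B = univ ↔ A ⊆ B := by
    simp only [subset_iff, eq_univ_iff_forall, mem_sdiff, mem_union, mem_univ, true_and]
    grind
  unfold SplitCompatible
  rw [h₁, h₂, h₃, h₄]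
  tauto

theorem splitCompatible_sdiff_right : SplitCompatible A (univ \ B) ↔ SplitCompatible A B := by
  rw [splitCompatible_comm, splitCompatible_sdiff_left, splitCompatible_comm]

theorem Fin.map_castSuccEmb_preimage {n : ℕ} {A : Finset (Fin (n + 1))} (h : Fin.last n ∉ A) :
    (A.preimage Fin.castSucc (Fin.castSucc_injective n).injOn).map Fin.castSuccEmb = A := by
  ext y
  cases y using Fin.lastCases <;> simp [h]

theorem Fin.preimage_castSucc_map_castSuccEmb {n : ℕ} (C : Finset (Fin n)) :
    (C.map Fin.castSuccEmb).preimage Fin.castSucc (Fin.castSucc_injective n).injOn = C := by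
  ext; simp

variable {n : ℕ}

-- The new taxon `Fin.last n` sits above the root: the cluster `C` becomes the split
-- `C | (univ \ C) ∪ {last}`.
def RTree.toUTree (T : RTree n) : UTree (n + 1) where
  splits := T.clusters.image (·.map Fin.castSuccEmb) ∪
    T.clusters.image fun C => univ \ C.map Fin.castSuccEmb
  empty_not_mem := by
    simp only [mem_union, mem_image, map_eq_empty, sdiff_eq_empty_iff_subset, not_or, not_exists,
      not_and]
    refine ⟨fun C hC h => T.empty_not_mem (h ▸ hC), fun C _ h => ?_⟩
    simpa using h (mem_univ (Fin.last n))
  trivial_mem x := by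
    refine Or.inr (Fin.lastCases ?_ (fun y => ?_) x)
    · refine mem_union_right _ (mem_image.mpr ⟨univ, T.univ_mem, ?_⟩)
      ext z
      cases z using Fin.lastCases <;> simp [Fin.castSucc_ne_last, eq_comm]
    · exact mem_union_left _ (mem_image.mpr ⟨{y}, T.singleton_mem y, by simp⟩)
  compl_mem := by
    simp only [mem_union, mem_image]
    rintro _ (⟨C, hC, rfl⟩ | ⟨C, hC, rfl⟩)
    · exact Or.inr ⟨C, hC, rfl⟩
    · exact Or.inl ⟨C, hC, by simp⟩
  compat := by
    have key : ∀ C ∈ T.clusters, ∀ D ∈ T.clusters,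
        SplitCompatible (C.map Fin.castSuccEmb) (D.map Fin.castSuccEmb) := by
      intro C hC D hD
      rcases T.laminar C hC D hD with h | h | h
      · exact Or.inl (map_subset_map.mpr h)
      · exact Or.inr (Or.inl (map_subset_map.mpr h))
      · exact Or.inr (Or.inr (Or.inl (by rw [← map_inter, h, map_empty])))
    simp only [mem_union, mem_image]
    rintro _ (⟨C, hC, rfl⟩ | ⟨C, hC, rfl⟩) _ (⟨D, hD, rfl⟩ | ⟨D, hD, rfl⟩) <;>
      change SplitCompatible _ _ <;>
      simpa only [splitCompatible_sdiff_left, splitCompatible_sdiff_right] using key C hC D hD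

theorem UTree.singleton_mem_splits (T : UTree (n + 1)) (hn : n ≠ 0) (x : Fin (n + 1)) :
    {x} ∈ T.splits :=
  (T.trivial_mem x).resolve_left fun h => by simpa [hn] using congrArg card h

noncomputable def UTree.toRTree (hn : n ≠ 0) (T : UTree (n + 1)) : RTree n where
  clusters := (T.splits.filter (Fin.last n ∉ ·)).image
    (·.preimage Fin.castSucc (Fin.castSucc_injective n).injOn)
  univ_mem := by
    refine mem_image.mpr ⟨univ \ {Fin.last n}, ?_, ?_⟩
    · exact mem_filter.mpr ⟨T.compl_mem _ (T.singleton_mem_splits hn _), by simp⟩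
    · ext x; simp [Fin.castSucc_ne_last]
  singleton_mem x := by
    refine mem_image.mpr ⟨{Fin.castSucc x}, ?_, ?_⟩
    · exact mem_filter.mpr
        ⟨T.singleton_mem_splits hn _, by simp [eq_comm, Fin.castSucc_ne_last]⟩
    · ext y; simp
  empty_not_mem := by
    simp only [mem_image, mem_filter, not_exists, not_and, and_imp]
    intro A hA hlast h
    rw [← Fin.map_castSuccEmb_preimage hlast, h, map_empty] at hA
    exact T.empty_not_mem hA
  laminar := by
    simp only [mem_image, mem_filter, and_imp, forall_exists_index]
    rintro _ A hA hAl rfl _ B hB hBl rfl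
    rcases T.compat A hA B hB with h | h | h | h
    · exact Or.inl (monotone_preimage (Fin.castSucc_injective n) h)
    · exact Or.inr (Or.inl (monotone_preimage (Fin.castSucc_injective n) h))
    · refine Or.inr (Or.inr ?_)
      rw [← preimage_inter]
      simp [h]
    · exact absurd (h ▸ mem_univ _ : Fin.last n ∈ A ∪ B) (by simp [hAl, hBl])

theorem UTree.toRTree_clusters_map (hn : n ≠ 0) (T : UTree (n + 1)) :
    (T.toRTree hn).clusters.image (·.map Fin.castSuccEmb) =
      T.splits.filter (Fin.last n ∉ ·) := by
  rw [toRTree, image_image]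
  refine (image_congr fun A hA => ?_).trans image_id'
  exact Fin.map_castSuccEmb_preimage (mem_filter.mp hA).2

theorem RTree.toUTree_splits_filter (T : RTree n) :
    T.toUTree.splits.filter (Fin.last n ∉ ·) = T.clusters.image (·.map Fin.castSuccEmb) := by
  ext A
  simp only [toUTree, mem_filter, mem_union, mem_image]
  constructor
  · rintro ⟨⟨C, hC, rfl⟩ | ⟨C, hC, rfl⟩, hl⟩
    · exact ⟨C, hC, rfl⟩
    · simp at hl
  · rintro ⟨C, hC, rfl⟩
    exact ⟨Or.inl ⟨C, hC, rfl⟩, by simp⟩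

noncomputable def RTree.equivUTree (hn : n ≠ 0) : RTree n ≃ UTree (n + 1) where
  toFun := toUTree
  invFun := UTree.toRTree hn
  left_inv T := clusters_injective <| by
    simp [UTree.toRTree, toUTree_splits_filter, image_image, Function.comp_def,
      Fin.preimage_castSucc_map_castSuccEmb]
  right_inv T := UTree.splits_injective <| by
    have hcompl : (T.toRTree hn).clusters.image (fun C => univ \ C.map Fin.castSuccEmb) =
        ((T.toRTree hn).clusters.image (·.map Fin.castSuccEmb)).image (univ \ ·) := by
      rw [image_image]; rfl
    change (T.toRTree hn).clusters.image _ ∪ (T.toRTree hn).clusters.image _ = T.splits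
    rw [hcompl, UTree.toRTree_clusters_map]
    ext A
    simp only [mem_union, mem_filter, mem_image]
    refine ⟨?_, fun h => ?_⟩
    · rintro (⟨h, -⟩ | ⟨B, ⟨hB, -⟩, rfl⟩)
      exacts [h, T.compl_mem B hB]
    · by_cases hA : Fin.last n ∈ A
      · exact Or.inr ⟨univ \ A, ⟨T.compl_mem A h, by simp [hA]⟩, by simp⟩
      · exact Or.inl ⟨h, hA⟩

theorem RTree.toUTree_resolved_iff (T : RTree n) {t : Finset (Fin n)} (ht : t.card = 3) :
    T.toUTree.Resolved (insert (Fin.last n) (t.map Fin.castSuccEmb)) ↔ T.Resolved t := by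
  set Y := insert (Fin.last n) (t.map Fin.castSuccEmb)
  have hY : Y.card = 4 := by simp [Y, ht]
  have h₁ (C : Finset (Fin n)) : (C.map Fin.castSuccEmb ∩ Y).card = (C ∩ t).card := by
    rw [inter_insert_of_notMem (by simp), ← map_inter, card_map]
  have h₂ (C : Finset (Fin n)) :
      ((univ \ C.map Fin.castSuccEmb) ∩ Y).card + (C ∩ t).card = 4 := by
    rw [← h₁, ← hY, ← card_union_of_disjoint
      (disjoint_sdiff_self_left.mono inter_subset_left inter_subset_left),
      ← union_inter_distrib_right, sdiff_union_of_subset (subset_univ _), univ_inter]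
  simp only [UTree.Resolved, famResolvedU, toUTree, mem_union, mem_image, Resolved, famResolved]
  constructor
  · rintro ⟨_, ⟨C, hC, rfl⟩ | ⟨C, hC, rfl⟩, h⟩
    · exact ⟨C, hC, h₁ C ▸ h⟩
    · exact ⟨C, hC, by have := h₂ C; omega⟩
  · rintro ⟨C, hC, h⟩
    exact ⟨_, Or.inl ⟨C, hC, rfl⟩, (h₁ C).trans h⟩

end RootedToUnrooted

theorem uResProb_eq_of_card_eq {m : ℕ} {X Y : Finset (Fin m)} (h : X.card = Y.card) :
    uResProb m X = uResProb m Y := by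
  obtain ⟨σ, rfl⟩ := exists_perm_image_eq h
  unfold uResProb
  congr 2
  exact card_equiv (UTree.mapEquiv σ) fun T => by simp [UTree.resolved_map]

theorem uResProb_succ_eq {n : ℕ} {X : Finset (Fin (n + 1))} (hX : X.card = 4)
    {t : Finset (Fin n)} (ht : t.card = 3) :
    uResProb (n + 1) X = #{T : RTree n | T.Resolved t} / Fintype.card (RTree n) := by
  have hn : n ≠ 0 := by
    have := card_le_univ t
    simp only [Fintype.card_fin] at this
    omega
  have hY : (insert (Fin.last n) (t.map Fin.castSuccEmb)).card = 4 := by simp [ht]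
  rw [uResProb_eq_of_card_eq (hX.trans hY.symm), uResProb,
    Fintype.card_congr (RTree.equivUTree hn).symm]
  congr 2
  exact (card_equiv (RTree.equivUTree hn) fun T => by
    simp [RTree.equivUTree, RTree.toUTree_resolved_iff T ht]).symm

namespace RTree

variable {n : ℕ}

noncomputable def tripletCost (p : ℝ) (t : Finset (Fin n)) (T₁ T₂ : RTree n) : ℝ :=
  (if T₁.Resolved t ∧ T₂.Resolved t ∧ T₁.restrict t ≠ T₂.restrict t then 1 else 0) +
    p * ((if T₁.Resolved t ∧ ¬ T₂.Resolved t then 1 else 0) +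
      (if T₂.Resolved t ∧ ¬ T₁.Resolved t then 1 else 0))

theorem pdist_eq_sum_tripletCost (p : ℝ) (T₁ T₂ : RTree n) :
    pdist p T₁ T₂ = ∑ t ∈ triplets n, tripletCost p t T₁ T₂ := by
  simp only [pdist, famPdist, famSetD, famSetR1, famSetR2, natCast_card_filter, tripletCost,
    sum_add_distrib, ← mul_sum]
  rfl

theorem sum_tripletCost (p : ℝ) (t : Finset (Fin n)) :
    ∑ T₁, ∑ T₂, tripletCost p t T₁ T₂ =
      #{x : RTree n × RTree n |
          x.1.Resolved t ∧ x.2.Resolved t ∧ x.1.restrict t ≠ x.2.restrict t} +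
        p * (#{x : RTree n × RTree n | x.1.Resolved t ∧ ¬ x.2.Resolved t} +
          #{x : RTree n × RTree n | x.2.Resolved t ∧ ¬ x.1.Resolved t}) := by
  simp only [tripletCost, sum_add_distrib, ← mul_sum, natCast_card_filter, Fintype.sum_prod_type]

theorem sum_tripletCost_div_card_sq (p : ℝ) {X : Finset (Fin (n + 1))} (hX : X.card = 4)
    {t : Finset (Fin n)} (ht : t.card = 3) :
    (∑ T₁, ∑ T₂, tripletCost p t T₁ T₂) / (Fintype.card (RTree n) : ℝ) ^ 2 =
      2 / 3 * uResProb (n + 1) X ^ 2 +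
        2 * p * uResProb (n + 1) X * (1 - uResProb (n + 1) X) := by
  have hD := three_mul_card_resolved_differently ht
  have hR₁ : #{x : RTree n × RTree n | x.1.Resolved t ∧ ¬ x.2.Resolved t} =
      #{T : RTree n | T.Resolved t} * #{T : RTree n | ¬ T.Resolved t} :=
    card_filter_univ_prod (fun T : RTree n => T.Resolved t) fun T : RTree n => ¬ T.Resolved t
  have hR₂ : #{x : RTree n × RTree n | x.2.Resolved t ∧ ¬ x.1.Resolved t} =
      #{T : RTree n | ¬ T.Resolved t} * #{T : RTree n | T.Resolved t} := by
    rw [← card_filter_univ_prod (fun T : RTree n => ¬ T.Resolved t)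
      fun T : RTree n => T.Resolved t]
    exact congrArg card (filter_congr fun _ _ => and_comm)
  have hN : #{T : RTree n | T.Resolved t} + #{T : RTree n | ¬ T.Resolved t} =
      Fintype.card (RTree n) := card_filter_add_card_filter_not _
  rw [sum_tripletCost, uResProb_succ_eq hX ht, hR₁, hR₂, ← hN]
  generalize #{x : RTree n × RTree n | x.1.Resolved t ∧ x.2.Resolved t ∧
    x.1.restrict t ≠ x.2.restrict t} = d at hD ⊢
  generalize #{T : RTree n | T.Resolved t} = a at hD ⊢
  generalize #{T : RTree n | ¬ T.Resolved t} = u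
  have hd : (d : ℝ) = 2 / 3 * a ^ 2 := by
    have : (3 * d : ℝ) = 2 * a ^ 2 := by exact_mod_cast hD
    linarith
  rcases eq_or_ne (a + u) 0 with h₀ | h₀
  · obtain ⟨rfl, rfl⟩ : a = 0 ∧ u = 0 := by omega
    simp
  have : (a + u : ℝ) ≠ 0 := by exact_mod_cast h₀
  rw [hd]
  push_cast
  field_simp
  ring

end RTree

theorem expected_parametric_triplet_distance_general (n : ℕ)
    (p : ℝ)
    (X : Finset (Fin (n + 1))) (hX : X.card = 4) :
    (∑ T₁ : RTree n, ∑ T₂ : RTree n, RTree.pdist p T₁ T₂) /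
        (Fintype.card (RTree n) : ℝ) ^ 2 =
      (n.choose 3 : ℝ) *
        (2 / 3 * uResProb (n + 1) X ^ 2 +
          2 * p * uResProb (n + 1) X * (1 - uResProb (n + 1) X)) := by
  simp_rw [RTree.pdist_eq_sum_tripletCost]
  rw [sum_congr rfl fun _ _ => sum_comm, sum_comm, sum_div,
    sum_congr rfl fun t ht => RTree.sum_tripletCost_div_card_sq p hX (mem_triplets.mp ht),
    sum_const, card_triplets, nsmul_eq_mul]

/-- **Theorem (expected parametric triplet distance, via quartet probabilities).**
For `T₁`, `T₂` chosen independently and uniformly at random from `RP(n)` and any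
`p ∈ [0,1]`, `E(d⁽ᵖ⁾(T₁,T₂)) = C(n,3) · ( (2/3)·r(n+1)² + 2·p·r(n+1)·u(n+1) )`,
where `r(n+1)` is the probability that a fixed quartet is resolved in a uniformly
random unrooted phylogeny over `[n+1]` and `u(n+1) = 1 - r(n+1)`. -/
theorem expected_parametric_triplet_distance (n : ℕ) (hn : 3 ≤ n)
    (p : ℝ) (hp0 : 0 ≤ p) (hp1 : p ≤ 1)
    (X : Finset (Fin (n + 1))) (hX : X.card = 4) :
    (∑ T₁ : RTree n, ∑ T₂ : RTree n, RTree.pdist p T₁ T₂) /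
        (Fintype.card (RTree n) : ℝ) ^ 2 =
      (n.choose 3 : ℝ) *
        (2 / 3 * uResProb (n + 1) X ^ 2 +
          2 * p * uResProb (n + 1) X * (1 - uResProb (n + 1) X)) :=
  expected_parametric_triplet_distance_general n p X hX
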